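/- arXiv:2602.15483 — 6 statements merged into one kernel-verified Lean document; each statement's English description precedes it below -/
import Mathlib

section
/- Consider a system A·x ≥ b of d Diophantine linear inequalities with n unknowns, where the absolute values of all coefficients of A and of b are bounded by N, and moreover b ≥ 0 componentwise. If the system has a nonnegative integer solution, then it has a nonnegative integer solution x with max-norm ‖x‖_∞ ≤ (r+1)·(r·N)^r, where r = rank(A). -/
/-!
Pass from the given solution to a vertex `y` of the rational polyhedron `{y | b ≤ A y, 0 ≤ y}`.
On the support `F` of `y`, the tight rows of `A` contain a nonsingular square subsystem
`M y|_F = b'`, and `|F| ≤ rank A`. By Cramer's rule `|det M| • y` is integral, with entries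
`|det (M with one column replaced by b')| ≤ |F|! N^|F| ≤ (r N)^r`; since `b ≥ 0` and
`|det M| ≥ 1`, scaling `y` up by `|det M|` keeps `b ≤ A y`.
-/

open Finset Matrix Module Submodule

section DotProduct

variable {K ι m : Type*} [Field K] [Fintype m]

lemma exists_ne_zero_forall_dotProduct_eq_zero {S : Submodule K (m → K)} (hS : S ≠ ⊤) :
    ∃ u ≠ 0, ∀ v ∈ S, v ⬝ᵥ u = 0 := by
  classical
  obtain ⟨f, hf, hfS⟩ := exists_dual_map_eq_bot_of_lt_top hS.lt_top inferInstance
  refine ⟨(dotProductEquiv K m).symm f, by simpa using hf, fun v hv => ?_⟩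
  have hfv : f v ∈ S.map f := mem_map_of_mem hv
  rw [hfS, mem_bot] at hfv
  rw [dotProduct_comm, ← hfv, ← dotProductEquiv_apply_apply, LinearEquiv.apply_symm_apply]

lemma exists_dotProduct_ne_zero_of_span_eq_top {G : Matrix ι m K}
    (hG : span K (Set.range G) = ⊤) {u : m → K} (hu : u ≠ 0) : ∃ k, G k ⬝ᵥ u ≠ 0 := by
  classical
  by_contra! h
  have hker : span K (Set.range G) ≤ LinearMap.ker (dotProductEquiv K m u) :=
    span_le.2 (by rintro _ ⟨k, rfl⟩; simpa [dotProduct_comm] using h k)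
  rw [hG] at hker
  exact hu (dotProduct_eq_zero u fun w => hker mem_top)

lemma mulVec_add_smul_apply (G : Matrix ι m K) (y w : m → K) (t : K) (k : ι) :
    (G *ᵥ (y + t • w)) k = (G *ᵥ y) k + t * G k ⬝ᵥ w := by
  rw [mulVec_add, mulVec_smul]
  rfl

end DotProduct

section Vertex

variable {K ι m : Type*} [Field K] [LinearOrder K] [IsStrictOrderedRing K]
  [Fintype ι] [Fintype m]

/-- `y` is a vertex of `{y | c ≤ G *ᵥ y}` exactly when this is `⊤`. -/
def tightSpan (G : Matrix ι m K) (c : ι → K) (y : m → K) : Submodule K (m → K) :=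
  span K (G '' {k | (G *ᵥ y) k = c k})

lemma exists_le_mulVec_add_smul_eq {G : Matrix ι m K} {c : ι → K} {y w : m → K}
    (hy : c ≤ G *ᵥ y) (hw : ∃ k, G k ⬝ᵥ w < 0) :
    ∃ t : K, c ≤ G *ᵥ (y + t • w) ∧ ∃ k, G k ⬝ᵥ w < 0 ∧ (G *ᵥ (y + t • w)) k = c k := by
  classical
  set D := univ.filter fun k => G k ⬝ᵥ w < 0
  have hD : D.Nonempty := by simpa [D, filter_nonempty_iff] using hw
  -- the ratio test of the simplex method
  set ratio : ι → K := fun k => ((G *ᵥ y) k - c k) / -(G k ⬝ᵥ w)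
  obtain ⟨k₀, hk₀, hmin⟩ := D.exists_min_image ratio hD
  have hk₀w : G k₀ ⬝ᵥ w < 0 := (mem_filter.1 hk₀).2
  refine ⟨ratio k₀, fun k => ?_, k₀, hk₀w, ?_⟩
  · rw [mulVec_add_smul_apply]
    rcases le_or_gt 0 (G k ⬝ᵥ w) with h | h
    · have : 0 ≤ ratio k₀ := div_nonneg (sub_nonneg.2 (hy k₀)) (by linarith)
      nlinarith [hy k]
    · have hle := hmin k (mem_filter.2 ⟨mem_univ k, h⟩)
      rw [le_div_iff₀ (by linarith)] at hle
      linarith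
  · rw [mulVec_add_smul_apply]
    simp only [ratio]
    field_simp [hk₀w.ne]
    ring

lemma exists_le_mulVec_finrank_tightSpan_lt {G : Matrix ι m K} {c : ι → K} {y : m → K}
    (hG : span K (Set.range G) = ⊤) (hy : c ≤ G *ᵥ y) (hy_top : tightSpan G c y ≠ ⊤) :
    ∃ y', c ≤ G *ᵥ y' ∧ finrank K (tightSpan G c y) < finrank K (tightSpan G c y') := by
  obtain ⟨u, hu, hu_orth⟩ := exists_ne_zero_forall_dotProduct_eq_zero hy_top
  obtain ⟨k, hk⟩ := exists_dotProduct_ne_zero_of_span_eq_top hG hu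
  obtain ⟨w, hw_orth, hw⟩ : ∃ w, (∀ v ∈ tightSpan G c y, v ⬝ᵥ w = 0) ∧ ∃ k, G k ⬝ᵥ w < 0 := by
    rcases hk.lt_or_gt with h | h
    · exact ⟨u, hu_orth, k, h⟩
    · exact ⟨-u, by simpa using hu_orth, k, by simpa using h⟩
  obtain ⟨t, ht, k₀, hk₀w, hk₀⟩ := exists_le_mulVec_add_smul_eq hy hw
  refine ⟨y + t • w, ht, Submodule.finrank_lt_finrank_of_lt (lt_of_le_of_ne ?_ fun h => ?_)⟩
  · refine span_mono (Set.image_mono fun k hk => ?_)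
    have hkw : G k ⬝ᵥ w = 0 := hw_orth _ (subset_span ⟨k, hk, rfl⟩)
    show (G *ᵥ (y + t • w)) k = c k
    rw [mulVec_add_smul_apply, hkw, mul_zero, add_zero]
    exact hk
  · have : G k₀ ∈ tightSpan G c y := h ▸ subset_span ⟨k₀, hk₀, rfl⟩
    exact hk₀w.ne (hw_orth _ this)

lemma exists_le_mulVec_tightSpan_eq_top {G : Matrix ι m K} {c : ι → K} {y : m → K}
    (hG : span K (Set.range G) = ⊤) (hy : c ≤ G *ᵥ y) :
    ∃ y', c ≤ G *ᵥ y' ∧ tightSpan G c y' = ⊤ := by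
  obtain ⟨y', hy', hmin⟩ :=
    (InvImage.wf (fun y => finrank K (m → K) - finrank K (tightSpan G c y)) wellFounded_lt).has_min
      {y | c ≤ G *ᵥ y} ⟨y, hy⟩
  refine ⟨y', hy', by_contra fun h => ?_⟩
  obtain ⟨y'', hy'', hlt⟩ := exists_le_mulVec_finrank_tightSpan_lt hG hy' h
  exact hmin y'' hy'' (by
    have := Submodule.finrank_le (tightSpan G c y'')
    simp only [InvImage]; omega)

end Vertex

section Subsystem

variable {K ι m n : Type*} [Field K] [Fintype m] [Fintype n] [DecidableEq n]

lemma span_range_fromRows_one_eq_top [DecidableEq m] (A : Matrix ι m K) :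
    span K (Set.range (fromRows A (1 : Matrix m m K))) = ⊤ := by
  refine eq_top_mono (span_mono ?_) (Pi.basisFun K m).span_eq
  rintro _ ⟨j, rfl⟩
  exact ⟨Sum.inr j, funext fun j' => by simp [one_eq_pi_single]⟩

lemma exists_det_submatrix_ne_zero_of_span_eq_top {B : Matrix ι n K}
    (hB : span K (Set.range B) = ⊤) : ∃ e : n → ι, (B.submatrix e id).det ≠ 0 := by
  obtain ⟨κ, a, -, hspan, hli⟩ := exists_linearIndependent' K B
  rw [hB] at hspan
  let σ : κ ≃ n := (Basis.mk hli hspan.ge).indexEquiv (Pi.basisFun K n)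
  have hli' : LinearIndependent K (B.submatrix (a ∘ σ.symm) id) :=
    hli.comp σ.symm σ.symm.injective
  exact ⟨a ∘ σ.symm,
    ((isUnit_iff_isUnit_det _).1 (linearIndependent_rows_iff_isUnit.1 hli')).ne_zero⟩

lemma span_tight_rows_restrict_support_eq_top [DecidableEq m] {A : Matrix ι m K} {b : ι → K}
    {y : m → K} (htop : tightSpan (fromRows A (1 : Matrix m m K)) (Sum.elim b 0) y = ⊤) :
    span K (Set.range fun i : {i // (A *ᵥ y) i = b i} => fun j : {j // y j ≠ 0} => A i j) = ⊤ := by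
  set π : (m → K) →ₗ[K] ({j // y j ≠ 0} → K) := LinearMap.funLeft K K Subtype.val
  have hπ : Function.Surjective π :=
    LinearMap.funLeft_surjective_of_injective K K _ Subtype.val_injective
  -- the tight rows of `1` are the `Pi.single j 1` with `j` off the support; they restrict to `0`
  have himage : π '' (fromRows A (1 : Matrix m m K) ''
      {k | (fromRows A (1 : Matrix m m K) *ᵥ y) k = Sum.elim b 0 k}) ⊆
      insert 0 (Set.range fun i : {i // (A *ᵥ y) i = b i} => fun j : {j // y j ≠ 0} => A i j) := by
    rintro _ ⟨_, ⟨i | j, hk, rfl⟩, rfl⟩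
    · exact Or.inr ⟨⟨i, by simpa using hk⟩, rfl⟩
    · refine Or.inl (funext fun p => ?_)
      have hyj : y j = 0 := by simpa using hk
      have : j ≠ p := fun h => p.2 (h ▸ hyj)
      simp [π, LinearMap.funLeft, one_apply, this]
  rw [← span_insert_zero, eq_top_iff, ← LinearMap.range_eq_top.2 hπ, LinearMap.range_eq_map,
    ← htop, tightSpan, map_span]
  exact span_mono himage

lemma exists_tight_det_submatrix_ne_zero [DecidableEq m] [DecidableEq K] {A : Matrix ι m K}
    {b : ι → K} {y : m → K}
    (htop : tightSpan (fromRows A (1 : Matrix m m K)) (Sum.elim b 0) y = ⊤) :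
    ∃ e : {j // y j ≠ 0} → ι, (∀ p, (A *ᵥ y) (e p) = b (e p)) ∧
      (A.submatrix e Subtype.val).det ≠ 0 := by
  obtain ⟨e, he⟩ :=
    exists_det_submatrix_ne_zero_of_span_eq_top (span_tight_rows_restrict_support_eq_top htop)
  exact ⟨fun p => e p, fun p => (e p).2, he⟩

lemma card_le_rank_of_det_submatrix_ne_zero {A : Matrix ι m K} {e : n → ι} {f : n → m}
    (h : (A.submatrix e f).det ≠ 0) : Fintype.card n ≤ A.rank := by
  rw [← rank_of_isUnit _ ((isUnit_iff_isUnit_det _).2 h.isUnit)]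
  exact rank_submatrix_le A e f

end Subsystem

section Cramer

variable {F : Type*} [Fintype F] [DecidableEq F]

lemma cast_cramer_eq_det_mul {M : Matrix F F ℤ} {c : F → ℤ} {z : F → ℚ}
    (hz : M.map (Int.cast : ℤ → ℚ) *ᵥ z = fun p => (c p : ℚ)) (p : F) :
    ((M.cramer c p : ℤ) : ℚ) = M.det * z p := by
  have hadj : M.adjugate.map (Int.castRingHom ℚ) = (M.map (Int.castRingHom ℚ)).adjugate :=
    (Int.castRingHom ℚ).map_adjugate M
  calc ((M.cramer c p : ℤ) : ℚ)
      = ((M.map (Int.castRingHom ℚ)).adjugate *ᵥ (M.map (Int.castRingHom ℚ) *ᵥ z)) p := by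
        rw [cramer_eq_adjugate_mulVec, ← eq_intCast (Int.castRingHom ℚ), RingHom.map_mulVec, hadj]
        exact congrArg (fun v => (_ *ᵥ v) p) hz.symm
    _ = M.det * z p := by
        rw [mulVec_mulVec, adjugate_mul, smul_mulVec, one_mulVec]
        simp [Int.cast_det]

lemma natAbs_cramer_le {M : Matrix F F ℤ} {c : F → ℤ} {N : ℕ}
    (hM : ∀ p q, (M p q).natAbs ≤ N) (hc : ∀ p, (c p).natAbs ≤ N) (p : F) :
    (M.cramer c p).natAbs ≤ (Fintype.card F).factorial * N ^ Fintype.card F := by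
  have hentries : ∀ q q', |M.updateCol p c q q'| ≤ (N : ℤ) := by
    intro q q'
    rw [updateCol_apply, Int.abs_eq_natAbs]
    split_ifs
    · exact_mod_cast hc q
    · exact_mod_cast hM q q'
  have := det_le (abv := AbsoluteValue.abs) hentries
  rw [cramer_apply, ← Int.ofNat_le, ← Int.abs_eq_natAbs]
  simpa using this

lemma factorial_mul_pow_le {k r : ℕ} (N : ℕ) (hk : 0 < k) (hkr : k ≤ r) :
    k.factorial * N ^ k ≤ (r + 1) * (r * N) ^ r := by
  rcases N.eq_zero_or_pos with rfl | hN
  · simp [hk.ne']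
  calc k.factorial * N ^ k ≤ r.factorial * N ^ r :=
        Nat.mul_le_mul (Nat.factorial_le hkr) (Nat.pow_le_pow_right hN hkr)
    _ ≤ r ^ r * N ^ r := Nat.mul_le_mul_right _ r.factorial_le_pow
    _ = (r * N) ^ r := (mul_pow r N r).symm
    _ ≤ (r + 1) * (r * N) ^ r := Nat.le_mul_of_pos_left _ r.succ_pos

end Cramer

section NatSolution

variable {ι m : Type*} [Fintype m]

lemma submatrix_support_mulVec {R : Type*} [Semiring R] [DecidableEq R] (A : Matrix ι m R)
    (y : m → R) (e : {j // y j ≠ 0} → ι) :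
    A.submatrix e Subtype.val *ᵥ (fun p : {j // y j ≠ 0} => y p) = fun p => (A *ᵥ y) (e p) := by
  ext p
  simp only [mulVec, dotProduct, submatrix_apply]
  rw [← sum_subtype (univ.filter fun j => y j ≠ 0) (by simp) fun j => A (e p) j * y j]
  exact sum_filter_of_ne fun j _ h hj => h (by simp [hj])

lemma le_sum_mul_iff_cast_le_mulVec (A : Matrix ι m ℤ) (b : ι → ℤ) (x : m → ℕ) (i : ι) :
    b i ≤ ∑ j, A i j * (x j : ℤ) ↔
      (b i : ℚ) ≤ (A.map (Int.cast : ℤ → ℚ) *ᵥ fun j => (x j : ℚ)) i := by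
  rw [← Int.cast_le (R := ℚ)]
  push_cast
  rfl

lemma exists_nat_solution_of_det_submatrix_ne_zero [DecidableEq m] {A : Matrix ι m ℤ} {b : ι → ℤ}
    {N r : ℕ}
    (hA : ∀ i j, (A i j).natAbs ≤ N) (hbN : ∀ i, (b i).natAbs ≤ N) (hb0 : ∀ i, 0 ≤ b i)
    {y : m → ℚ} (hy0 : 0 ≤ y) (hyb : (fun i => (b i : ℚ)) ≤ A.map (Int.cast : ℤ → ℚ) *ᵥ y)
    {e : {j // y j ≠ 0} → ι} (htight : ∀ p, (A.map (Int.cast : ℤ → ℚ) *ᵥ y) (e p) = b (e p))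
    (hdet : ((A.map (Int.cast : ℤ → ℚ)).submatrix e Subtype.val).det ≠ 0)
    (hr : Fintype.card {j // y j ≠ 0} ≤ r) :
    ∃ x : m → ℕ, (∀ i, b i ≤ ∑ j, A i j * (x j : ℤ)) ∧ ∀ j, x j ≤ (r + 1) * (r * N) ^ r := by
  set M := A.submatrix e Subtype.val
  have hz : M.map (Int.cast : ℤ → ℚ) *ᵥ (fun p : {j // y j ≠ 0} => y p) =
      fun p => ((b (e p) : ℤ) : ℚ) := by
    rw [show M.map (Int.cast : ℤ → ℚ) = (A.map Int.cast).submatrix e Subtype.val from rfl,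
      submatrix_support_mulVec]
    exact funext htight
  set x : m → ℕ := fun j =>
    if h : y j ≠ 0 then (M.cramer (fun p => b (e p)) ⟨j, h⟩).natAbs else 0
  have hx : (fun j => (x j : ℚ)) = |(M.det : ℚ)| • y := by
    ext j
    by_cases h : y j ≠ 0
    · simp only [x]
      rw [dif_pos h, Pi.smul_apply, smul_eq_mul, Nat.cast_natAbs, Int.cast_abs,
        cast_cramer_eq_det_mul hz, abs_mul, abs_of_nonneg (hy0 j)]
    · simp only [x]
      simp [not_not.1 h]
  have hdet_one : (1 : ℚ) ≤ |(M.det : ℚ)| := by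
    rw [show (A.map Int.cast).submatrix e Subtype.val = M.map (Int.cast : ℤ → ℚ) from rfl,
      ← Int.cast_det, Int.cast_ne_zero] at hdet
    exact_mod_cast Int.one_le_abs hdet
  refine ⟨x, fun i => ?_, fun j => ?_⟩
  · rw [le_sum_mul_iff_cast_le_mulVec, hx, mulVec_smul, Pi.smul_apply, smul_eq_mul]
    have hbi : (0 : ℚ) ≤ b i := by exact_mod_cast hb0 i
    nlinarith [hyb i]
  · by_cases h : y j ≠ 0
    · have hcard : 0 < Fintype.card {j // y j ≠ 0} := Fintype.card_pos_iff.2 ⟨⟨j, h⟩⟩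
      refine le_trans ?_ (factorial_mul_pow_le N hcard hr)
      simp only [x]
      rw [dif_pos h]
      exact natAbs_cramer_le (fun p q => hA (e p) q) (fun p => hbN (e p)) ⟨j, h⟩
    · simp only [x]
      rw [dif_neg h]
      exact Nat.zero_le _

end NatSolution

/-- If a system A·x ≥ b of d integer linear inequalities in n unknowns, with all
coefficients of A and b bounded by N in absolute value and b ≥ 0 componentwise,
has a nonnegative integer solution, then it has one with max-norm at most
(r+1)·(r·N)^r where r is the rank of A over ℚ. -/
theorem small_nonneg_solution_of_inequalities {d n N : ℕ}
    (A : Matrix (Fin d) (Fin n) ℤ) (b : Fin d → ℤ)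
    (hA : ∀ i j, (A i j).natAbs ≤ N) (hbN : ∀ i, (b i).natAbs ≤ N)
    (hb0 : ∀ i, 0 ≤ b i)
    (hsol : ∃ x : Fin n → ℕ, ∀ i, b i ≤ ∑ j, A i j * (x j : ℤ)) :
    ∃ x : Fin n → ℕ, (∀ i, b i ≤ ∑ j, A i j * (x j : ℤ)) ∧
      ∀ j, x j ≤ ((A.map (fun z : ℤ => (z : ℚ))).rank + 1) *
        ((A.map (fun z : ℤ => (z : ℚ))).rank * N) ^ (A.map (fun z : ℤ => (z : ℚ))).rank := by
  set Aq := A.map (fun z : ℤ => (z : ℚ))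
  obtain ⟨x₀, hx₀⟩ := hsol
  have hx₀q : Sum.elim (fun i => (b i : ℚ)) 0 ≤
      fromRows Aq (1 : Matrix (Fin n) (Fin n) ℚ) *ᵥ fun j => (x₀ j : ℚ) := by
    simpa [fromRows_mulVec, Pi.le_def, le_sum_mul_iff_cast_le_mulVec] using hx₀
  obtain ⟨y, hy, htop⟩ :=
    exists_le_mulVec_tightSpan_eq_top (span_range_fromRows_one_eq_top Aq) hx₀q
  obtain ⟨hyb, hy0⟩ : (fun i => (b i : ℚ)) ≤ Aq *ᵥ y ∧ 0 ≤ y := by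
    simpa [fromRows_mulVec] using hy
  obtain ⟨e, htight, hdet⟩ := exists_tight_det_submatrix_ne_zero htop
  exact exists_nat_solution_of_det_submatrix_ne_zero hA hbN hb0 hy0 hyb htight hdet
    (card_le_rank_of_det_submatrix_ne_zero hdet)
end

section
/- Let V = (Q,T) be a d-VASS with n states and geometric dimension g whose strongly connected components form a chain (the condensation is a directed path with consecutive SCCs connected by a single transition). Then for every configuration p(u) and every C ∈ ℕ, the number of C-small configurations reachable from p(u) is at most n · (d · C)^g. -/
open Finset


/-- A transition of a `d`-dimensional VASS with state space `Fin n`: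
source state, effect vector, target state. -/
abbrev Transition (n d : ℕ) := Fin n × (Fin d → ℤ) × Fin n

/-- A `d`-VASS with states `Fin n`, given by its finite set of transitions. -/
abbrev VASS (n d : ℕ) := Finset (Transition n d)

/-- A path: a sequence of transitions of `T` in which the target state of each
transition equals the source state of the next. -/
def IsPath {n d : ℕ} (T : VASS n d) (ts : List (Transition n d)) : Prop :=
  (∀ t ∈ ts, t ∈ T) ∧ ts.Chain' (fun t t' => t.2.2 = t'.1)

/-- The effect of a path: the sum of the vectors of its transitions. -/
def effect {n d : ℕ} (ts : List (Transition n d)) : Fin d → ℤ :=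
  (ts.map (fun t => t.2.1)).sum

/-- A cycle: a nonempty path whose first source state equals its last target state. -/
def IsCycle {n d : ℕ} (T : VASS n d) (ts : List (Transition n d)) : Prop :=
  IsPath T ts ∧ ∃ h : ts ≠ [], (ts.getLast h).2.2 = (ts.head h).1

/-- Embedding of integer vectors into rational vectors. -/
def toQ {d : ℕ} (v : Fin d → ℤ) : Fin d → ℚ := fun i => (v i : ℚ)

/-- The cycle space of a VASS: the ℚ-vector space spanned by the effects of all cycles. -/
def cycleSpace {n d : ℕ} (T : VASS n d) : Submodule ℚ (Fin d → ℚ) :=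
  Submodule.span ℚ { x | ∃ ts, IsCycle T ts ∧ x = toQ (effect ts) }

/-- The geometric dimension of a VASS: the dimension of its cycle space. -/
noncomputable def geomDim {n d : ℕ} (T : VASS n d) : ℕ :=
  Module.finrank ℚ (cycleSpace T)


/-- A configuration: a state together with nonnegative counter values. -/
abbrev Config (n d : ℕ) := Fin n × (Fin d → ℕ)

/-- One step of a VASS between configurations. -/
def Step {n d : ℕ} (T : VASS n d) (c c' : Config n d) : Prop :=
  ∃ a : Fin d → ℤ, (c.1, a, c'.1) ∈ T ∧ ∀ i, (c'.2 i : ℤ) = (c.2 i : ℤ) + a i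

/-- A run from `c` visiting the configurations `cs` (in order); its length is `cs.length`. -/
def IsRunFrom {n d : ℕ} (T : VASS n d) (c : Config n d) (cs : List (Config n d)) : Prop :=
  List.Chain (Step T) c cs

/-- The final configuration of a run from `c` through `cs`. -/
def runEnd {n d : ℕ} (c : Config n d) (cs : List (Config n d)) : Config n d :=
  (c :: cs).getLast (List.cons_ne_nil _ _)

/-- Reachability between configurations. -/
def Reachable {n d : ℕ} (T : VASS n d) (c c' : Config n d) : Prop :=
  ∃ cs, IsRunFrom T c cs ∧ runEnd c cs = c'


/-- Edge relation on states induced by the transitions. -/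
def StateEdge {n d : ℕ} (T : VASS n d) (p q : Fin n) : Prop := ∃ a, (p, a, q) ∈ T

/-- Reachability between states along transitions. -/
def StateReach {n d : ℕ} (T : VASS n d) : Fin n → Fin n → Prop :=
  Relation.ReflTransGen (StateEdge T)

/-- The strongly connected components of the VASS form a chain: there is a `level`
function whose classes are exactly the SCCs, transitions stay in a level or move to
the next one, consecutive levels are connected by exactly one transition, and the
occupied levels form an initial segment of ℕ. -/
def SCCChain {n d : ℕ} (T : VASS n d) : Prop :=
  ∃ level : Fin n → ℕ,
    (∀ p q, (StateReach T p q ∧ StateReach T q p) ↔ level p = level q) ∧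
    (∀ t ∈ T, level t.2.2 = level t.1 ∨ level t.2.2 = level t.1 + 1) ∧
    (∀ ℓ : ℕ, (∃ p, level p = ℓ + 1) →
      ∃! t, t ∈ T ∧ level t.1 = ℓ ∧ level t.2.2 = ℓ + 1) ∧
    (∀ p : Fin n, ∀ k ≤ level p, ∃ q, level q = k)


/-- A clean basis of a subspace `U ⊆ ℚ^d`: a basis `b 1, …, b g` together with
injectively chosen distinguished coordinates `K 1, …, K g` on which the basis
vectors form the `g × g` identity matrix. -/
def IsCleanBasis {d g : ℕ} (U : Submodule ℚ (Fin d → ℚ)) (b : Fin g → (Fin d → ℚ))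
    (K : Fin g → Fin d) : Prop :=
  LinearIndependent ℚ b ∧ Submodule.span ℚ (Set.range b) = U ∧
  Function.Injective K ∧ ∀ i j, b i (K j) = if i = j then 1 else 0


/-- A vector `v ∈ ℕ^d` is `C`-small with respect to `U` if some clean basis of `U`
has all distinguished coordinates of `v` below `C`. -/
def CSmall {d : ℕ} (g : ℕ) (U : Submodule ℚ (Fin d → ℚ)) (C : ℕ) (v : Fin d → ℕ) : Prop :=
  ∃ (b : Fin g → (Fin d → ℚ)) (K : Fin g → Fin d),
    IsCleanBasis U b K ∧ ∀ j, v (K j) < C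

/-!
Two configurations reachable from `p(u)` in the same state `q` differ by an element of the cycle
space. Indeed, any two paths from `p` to `q` pass between consecutive SCCs through the same unique
bridging transitions, so their effects differ by a sum of differences of two paths with endpoints
in a common SCC; closing both with a return path turns each such difference into a difference of
cycle effects. Since an element of a subspace is determined by its distinguished coordinates in a
clean basis, a `C`-small reachable configuration is determined by its state, its `g` distinguished
coordinates (at most `d ^ g` choices) and its values there (at most `C ^ g` choices).
-/

section Paths

variable {n d : ℕ} {T : VASS n d}

inductive PathBetween (T : VASS n d) : Fin n → Fin n → List (Transition n d) → Prop
  | nil (a : Fin n) : PathBetween T a a []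
  | cons {t : Transition n d} {b : Fin n} {l : List (Transition n d)} :
      t ∈ T → PathBetween T t.2.2 b l → PathBetween T t.1 b (t :: l)

namespace PathBetween

variable {a b c : Fin n} {l l₁ l₂ : List (Transition n d)}

theorem append (h₁ : PathBetween T a b l₁) (h₂ : PathBetween T b c l₂) :
    PathBetween T a c (l₁ ++ l₂) := by
  induction h₁ with
  | nil => exact h₂
  | cons ht _ ih => exact cons ht (ih h₂)

theorem eq_of_nil (h : PathBetween T a b []) : a = b := by
  cases h
  rfl

theorem head_fst (h : PathBetween T a b l) (hl : l ≠ []) : (l.head hl).1 = a := by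
  cases h
  · contradiction
  · rfl

theorem isPath (h : PathBetween T a b l) : IsPath T l := by
  induction h with
  | nil => exact ⟨by simp, List.isChain_nil⟩
  | @cons t _ l ht h ih =>
    refine ⟨List.forall_mem_cons.2 ⟨ht, ih.1⟩, ?_⟩
    rcases l with _ | ⟨t', l'⟩
    · exact List.isChain_singleton _
    · exact List.isChain_cons_cons.2 ⟨(h.head_fst (List.cons_ne_nil _ _)).symm, ih.2⟩

theorem getLast_snd_snd (h : PathBetween T a b l) (hl : l ≠ []) : (l.getLast hl).2.2 = b := by
  induction h with
  | nil => contradiction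
  | @cons t _ l _ h ih =>
    rcases l with _ | ⟨t', l'⟩
    · exact h.eq_of_nil
    · rw [List.getLast_cons_cons]
      exact ih _

theorem isCycle (h : PathBetween T a a l) (hl : l ≠ []) : IsCycle T l :=
  ⟨h.isPath, hl, by rw [h.getLast_snd_snd hl, h.head_fst hl]⟩

end PathBetween

theorem StateReach.exists_path {a b : Fin n} (h : StateReach T a b) :
    ∃ l, PathBetween T a b l := by
  induction h using Relation.ReflTransGen.head_induction_on with
  | refl => exact ⟨[], .nil b⟩
  | head hab _ ih =>
    obtain ⟨x, hx⟩ := hab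
    obtain ⟨l, hl⟩ := ih
    exact ⟨_, .cons hx hl⟩

theorem Reachable.exists_path {c c' : Config n d} (h : Reachable T c c') :
    ∃ l, PathBetween T c.1 c'.1 l ∧ ∀ i, (c'.2 i : ℤ) = c.2 i + effect l i := by
  obtain ⟨cs, hrun, rfl⟩ := h
  induction cs generalizing c with
  | nil => exact ⟨[], .nil _, fun i => by simp [runEnd, effect]⟩
  | cons c₁ cs ih =>
    obtain ⟨⟨x, hx, hxeff⟩, hrun⟩ := List.isChain_cons_cons.1 hrun
    obtain ⟨l, hl, heff⟩ := ih hrun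
    refine ⟨(c.1, x, c₁.1) :: l, .cons hx hl, fun i => ?_⟩
    simp only [runEnd, List.getLast_cons_cons] at heff ⊢
    simp only [effect, List.map_cons, List.sum_cons, Pi.add_apply] at heff ⊢
    rw [heff i, hxeff i]
    ring

end Paths

section CycleSpace

variable {n d : ℕ} {T : VASS n d}

theorem toQ_add (v w : Fin d → ℤ) : toQ (v + w) = toQ v + toQ w := by
  ext i
  simp [toQ]

theorem effect_append (l₁ l₂ : List (Transition n d)) :
    effect (l₁ ++ l₂) = effect l₁ + effect l₂ := by
  simp [effect]

theorem effect_cons (t : Transition n d) (l : List (Transition n d)) :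
    effect (t :: l) = t.2.1 + effect l := by
  simp [effect]

theorem PathBetween.toQ_effect_mem_cycleSpace {a : Fin n} {l : List (Transition n d)}
    (h : PathBetween T a a l) : toQ (effect l) ∈ cycleSpace T := by
  rcases eq_or_ne l [] with rfl | hl
  · convert (cycleSpace T).zero_mem
    ext i
    simp [toQ, effect]
  · exact Submodule.subset_span ⟨l, h.isCycle hl, rfl⟩

theorem toQ_effect_sub_mem_cycleSpace_of_stateReach {a b : Fin n}
    {l₁ l₂ : List (Transition n d)} (hba : StateReach T b a)
    (h₁ : PathBetween T a b l₁) (h₂ : PathBetween T a b l₂) :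
    toQ (effect l₁) - toQ (effect l₂) ∈ cycleSpace T := by
  obtain ⟨r, hr⟩ := hba.exists_path
  simpa [effect_append, toQ_add] using
    sub_mem (h₁.append hr).toQ_effect_mem_cycleSpace (h₂.append hr).toQ_effect_mem_cycleSpace

section Levels

variable {level : Fin n → ℕ}

theorem PathBetween.level_le
    (hstep : ∀ t ∈ T, level t.2.2 = level t.1 ∨ level t.2.2 = level t.1 + 1)
    {a b : Fin n} {l : List (Transition n d)} (h : PathBetween T a b l) : level a ≤ level b := by
  induction h with
  | nil => rfl
  | cons ht _ ih => rcases hstep _ ht with h | h <;> omega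

theorem PathBetween.exists_entry
    (hstep : ∀ t ∈ T, level t.2.2 = level t.1 ∨ level t.2.2 = level t.1 + 1)
    {a b : Fin n} {l : List (Transition n d)} (h : PathBetween T a b l)
    (hlt : level a < level b) :
    ∃ l₁ t l₂, l = l₁ ++ t :: l₂ ∧ PathBetween T a t.1 l₁ ∧ t ∈ T ∧
      PathBetween T t.2.2 b l₂ ∧ level t.1 + 1 = level b ∧ level t.2.2 = level b := by
  induction h with
  | nil => omega
  | @cons t b l ht h ih =>
    by_cases hin : level t.2.2 = level b
    · refine ⟨[], t, l, rfl, .nil _, ht, h, ?_, hin⟩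
      rcases hstep t ht with h' | h' <;> omega
    · obtain ⟨l₁, t', l₂, rfl, h₁, ht', h₂, hent⟩ :=
        ih ((h.level_le hstep).lt_of_ne hin)
      exact ⟨t :: l₁, t', l₂, rfl, .cons ht h₁, ht', h₂, hent⟩

end Levels

theorem SCCChain.toQ_effect_sub_mem_cycleSpace (hT : SCCChain T) {a b : Fin n}
    {l₁ l₂ : List (Transition n d)} (h₁ : PathBetween T a b l₁) (h₂ : PathBetween T a b l₂) :
    toQ (effect l₁) - toQ (effect l₂) ∈ cycleSpace T := by
  obtain ⟨level, hscc, hstep, hbridge, -⟩ := hT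
  induction hk : level b using Nat.strong_induction_on generalizing b l₁ l₂ with
  | _ k ih =>
  rcases (h₁.level_le hstep).eq_or_lt with heq | hlt
  · exact toQ_effect_sub_mem_cycleSpace_of_stateReach ((hscc b a).2 heq.symm).1 h₁ h₂
  obtain ⟨A₁, t, B₁, rfl, hA₁, ht, hB₁, hent, hin⟩ := h₁.exists_entry hstep hlt
  obtain ⟨A₂, t₂, B₂, rfl, hA₂, ht₂, hB₂, hent₂, hin₂⟩ := h₂.exists_entry hstep hlt
  -- both paths enter the SCC of `b` through the unique bridge into it
  obtain rfl : t₂ = t := (hbridge (level t.1) ⟨b, hent.symm⟩).unique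
    ⟨ht₂, by omega, by omega⟩ ⟨ht, rfl, by omega⟩
  have hA := ih _ (by omega) hA₁ hA₂ rfl
  have hB := toQ_effect_sub_mem_cycleSpace_of_stateReach ((hscc _ _).2 hin.symm).1 hB₁ hB₂
  convert add_mem hA hB using 1
  simp only [effect_append, effect_cons, toQ_add]
  abel

theorem SCCChain.natCast_sub_mem_cycleSpace (hT : SCCChain T) {c₀ c c' : Config n d}
    (h : Reachable T c₀ c) (h' : Reachable T c₀ c') (hq : c.1 = c'.1) :
    (Nat.cast ∘ c.2 : Fin d → ℚ) - Nat.cast ∘ c'.2 ∈ cycleSpace T := by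
  obtain ⟨l, hl, he⟩ := h.exists_path
  obtain ⟨l', hl', he'⟩ := h'.exists_path
  rw [← hq] at hl'
  convert hT.toQ_effect_sub_mem_cycleSpace hl hl' using 1
  ext i
  have e := congrArg (Int.cast : ℤ → ℚ) (he i)
  have e' := congrArg (Int.cast : ℤ → ℚ) (he' i)
  push_cast at e e'
  simp only [Pi.sub_apply, Function.comp_apply, toQ, e, e']
  ring

end CycleSpace

theorem IsCleanBasis.eq_zero_of_apply_eq_zero {d g : ℕ} {U : Submodule ℚ (Fin d → ℚ)}
    {b : Fin g → Fin d → ℚ} {K : Fin g → Fin d} (hB : IsCleanBasis U b K)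
    {x : Fin d → ℚ} (hx : x ∈ U) (h0 : ∀ j, x (K j) = 0) : x = 0 := by
  obtain ⟨-, hspan, -, hid⟩ := hB
  rw [← hspan] at hx
  obtain ⟨c, rfl⟩ := (Submodule.mem_span_range_iff_exists_fun ℚ).1 hx
  have hc : ∀ j, c j = 0 := fun j => by simpa [Finset.sum_apply, hid] using h0 j
  simp [hc]

theorem finite_and_ncard_le_of_cSmall {n d g C : ℕ} {U : Submodule ℚ (Fin d → ℚ)}
    (S : Set (Config n d)) (hsmall : ∀ c ∈ S, CSmall g U C c.2)
    (hsub : ∀ c ∈ S, ∀ c' ∈ S, c.1 = c'.1 → (Nat.cast ∘ c.2 : Fin d → ℚ) - Nat.cast ∘ c'.2 ∈ U) :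
    S.Finite ∧ S.ncard ≤ n * (d * C) ^ g := by
  choose b K hclean hlt using fun c : S => hsmall c c.2
  let code : S → Fin n × (Fin g → Fin d) × (Fin g → Fin C) :=
    fun c => ((c : Config n d).1, K c, fun j => ⟨(c : Config n d).2 (K c j), hlt c j⟩)
  have hcode : Function.Injective code := by
    rintro ⟨⟨q, v⟩, hc⟩ ⟨⟨q', v'⟩, hc'⟩ heq
    simp only [code, Prod.mk.injEq, funext_iff, Fin.mk.injEq] at heq
    obtain ⟨rfl, hK, hval⟩ := heq
    have hzero := (hclean ⟨_, hc⟩).eq_zero_of_apply_eq_zero (hsub _ hc _ hc' rfl)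
      fun j => by
        dsimp only [Pi.sub_apply, Function.comp_apply]
        rw [hval j, hK j, sub_self]
    have hv : v = v' := funext fun i => by
      simpa [sub_eq_zero] using congrFun hzero i
    subst hv
    rfl
  refine ⟨Set.finite_coe_iff.1 (Finite.of_injective code hcode), ?_⟩
  calc S.ncard = Nat.card S := (Nat.card_coe_set_eq S).symm
    _ ≤ Nat.card (Fin n × (Fin g → Fin d) × (Fin g → Fin C)) :=
        Nat.card_le_card_of_injective code hcode
    _ = n * (d * C) ^ g := by simp [mul_pow]

theorem card_small_reachable_le_general {n d g : ℕ} (T : VASS n d)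
    (hchain : SCCChain T)
    (p : Fin n) (u : Fin d → ℕ) (C : ℕ) :
    {c : Config n d | Reachable T (p, u) c ∧ CSmall g (cycleSpace T) C c.2}.Finite ∧
    {c : Config n d | Reachable T (p, u) c ∧ CSmall g (cycleSpace T) C c.2}.ncard ≤
      n * (d * C) ^ g :=
  finite_and_ncard_le_of_cSmall _ (fun _ hc => hc.2)
    fun _ hc _ hc' hq => hchain.natCast_sub_mem_cycleSpace hc.1 hc'.1 hq

/-- In a VASS with n states and geometric dimension g whose SCCs form a chain,
for any configuration p(u) and any C ∈ ℕ, the set of C-small configurations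
reachable from p(u) is finite of cardinality at most n·(d·C)^g. -/
theorem card_small_reachable_le {n d g : ℕ} (T : VASS n d)
    (hchain : SCCChain T) (hg : geomDim T = g)
    (p : Fin n) (u : Fin d → ℕ) (C : ℕ) :
    {c : Config n d | Reachable T (p, u) c ∧ CSmall g (cycleSpace T) C c.2}.Finite ∧
    {c : Config n d | Reachable T (p, u) c ∧ CSmall g (cycleSpace T) C c.2}.ncard ≤
      n * (d * C) ^ g :=
  card_small_reachable_le_general T hchain p u C
end

section
/- Let U ⊆ ℚ^d be a g-dimensional vector subspace, v ∈ ℕ^d, and C ∈ ℕ. If v is C-large with respect to U, then there exists a clean basis B = {b_1, …, b_g} of U and an index i ∈ {1,…,g} such that for every coordinate j ∈ {1,…,d}, b_i[j] ≠ 0 implies v[j] ≥ C. -/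
open Finset


/-!
Clean bases exist by Gauss–Jordan elimination. Among them take one with the fewest distinguished
coordinates `k` such that `C ≤ v k`. As `v` is `C`-large, some `b i` has `C ≤ v (K i)`. If `b i`
had a nonzero entry at a coordinate `j` with `v j < C`, pivoting on `(i, j)` would trade `K i` for
`j` and give a clean basis with fewer such coordinates.
-/

section Pivot

variable {F ι κ : Type*} [Field F] [DecidableEq ι]

theorem linearIndependent_of_apply_eq_ite {b : ι → κ → F} {K : ι → κ}
    (hbK : ∀ i j, b i (K j) = if i = j then 1 else 0) : LinearIndependent F b := by
  rw [linearIndependent_iff']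
  intro s c hc i hi
  simpa [Finset.sum_apply, hbK, hi] using congrFun hc (K i)

theorem injective_of_apply_eq_ite {b : ι → κ → F} {K : ι → κ}
    (hbK : ∀ i j, b i (K j) = if i = j then 1 else 0) : Function.Injective K := by
  intro p q hpq
  by_contra hne
  have h := hbK p p
  rw [hpq, hbK, if_neg hne] at h
  simp at h

def IsCleanFamily (U : Submodule F (κ → F)) (b : ι → κ → F) (K : ι → κ) : Prop :=
  (∀ i, b i ∈ U) ∧ ∀ i j, b i (K j) = if i = j then 1 else 0

def pivot (b : ι → κ → F) (i : ι) (j : κ) : ι → κ → F :=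
  Function.update (fun p => b p - b p j • (b i j)⁻¹ • b i) i ((b i j)⁻¹ • b i)

theorem pivot_mem {U : Submodule F (κ → F)} {b : ι → κ → F} (hb : ∀ p, b p ∈ U) (i : ι) (j : κ)
    (p : ι) : pivot b i j p ∈ U := by
  rcases eq_or_ne p i with rfl | hp
  · simpa [pivot] using U.smul_mem _ (hb p)
  · simpa [pivot, hp] using U.sub_mem (hb p) (U.smul_mem _ (U.smul_mem _ (hb i)))

theorem pivot_apply_update {b : ι → κ → F} {K : ι → κ} {i : ι} {j : κ}
    (hbK : ∀ p q, q ≠ i → b p (K q) = if p = q then 1 else 0) (hij : b i j ≠ 0) (p q : ι) :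
    pivot b i j p (Function.update K i j q) = if p = q then 1 else 0 := by
  rcases eq_or_ne q i with rfl | hq
  · rcases eq_or_ne p q with rfl | hp
    · simp [pivot, hij]
    · simp [pivot, hp, hij]
  · have hiq : b i (K q) = 0 := by simpa [hq.symm] using hbK i q hq
    rcases eq_or_ne p i with rfl | hp
    · simp [pivot, hq, hiq, hq.symm]
    · simp [pivot, hp, hq, hiq, hbK p q hq]

end Pivot

section CleanBasis

variable {d g : ℕ} {U : Submodule ℚ (Fin d → ℚ)}

theorem IsCleanBasis.of_isCleanFamily {b : Fin g → Fin d → ℚ} {K : Fin g → Fin d}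
    (hU : Module.finrank ℚ U = g) (h : IsCleanFamily U b K) : IsCleanBasis U b K := by
  have hli := linearIndependent_of_apply_eq_ite h.2
  refine ⟨hli, ?_, injective_of_apply_eq_ite h.2, h.2⟩
  apply Submodule.eq_of_le_of_finrank_eq (Submodule.span_le.2 (Set.range_subset_iff.2 h.1))
  rw [finrank_span_eq_card hli, Fintype.card_fin, hU]

theorem IsCleanBasis.pivot {b : Fin g → Fin d → ℚ} {K : Fin g → Fin d} (h : IsCleanBasis U b K)
    {i : Fin g} {j : Fin d} (hij : b i j ≠ 0) :
    IsCleanBasis U (pivot b i j) (Function.update K i j) := by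
  obtain ⟨hli, hspan, -, hbK⟩ := h
  have hb : ∀ p, b p ∈ U := fun p => hspan ▸ Submodule.subset_span (Set.mem_range_self p)
  refine .of_isCleanFamily ?_ ⟨pivot_mem hb i j, pivot_apply_update (fun p q _ => hbK p q) hij⟩
  rw [← hspan, finrank_span_eq_card hli, Fintype.card_fin]

theorem exists_isCleanFamily_succ {m : ℕ} {b : Fin m → Fin d → ℚ} {K : Fin m → Fin d}
    (h : IsCleanFamily U b K) (hm : m < Module.finrank ℚ U) :
    ∃ (b' : Fin (m + 1) → Fin d → ℚ) (K' : Fin (m + 1) → Fin d), IsCleanFamily U b' K' := by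
  obtain ⟨hb, hbK⟩ := h
  obtain ⟨u, huU, hu⟩ : ∃ u ∈ U, u ∉ Submodule.span ℚ (Set.range b) := by
    by_contra! hle
    have := Submodule.finrank_mono (show U ≤ _ from hle)
    rw [finrank_span_eq_card (linearIndependent_of_apply_eq_ite hbK), Fintype.card_fin] at this
    omega
  set r := u - ∑ p, u (K p) • b p with hr
  have hrK : ∀ q, r (K q) = 0 := by
    intro q
    simp [hr, Finset.sum_apply, hbK]
  obtain ⟨k, hk⟩ : ∃ k, r k ≠ 0 := by
    by_contra! h
    exact hu (sub_eq_zero.1 (funext h) ▸ Submodule.sum_mem _ fun p _ =>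
      Submodule.smul_mem _ _ (Submodule.subset_span (Set.mem_range_self p)))
  -- Appending `r` keeps the identity pattern on the old columns, which is all a pivot needs.
  have hsnoc : ∀ p q, q ≠ Fin.last m →
      (Fin.snoc b r : Fin (m + 1) → Fin d → ℚ) p ((Fin.snoc K k : Fin (m + 1) → Fin d) q) =
        if p = q then 1 else 0 := by
    intro p q hq
    obtain ⟨q, rfl⟩ := Fin.exists_castSucc_eq.2 hq
    induction p using Fin.lastCases with
    | last => simp [hrK, (Fin.castSucc_lt_last q).ne']
    | cast p => simp [hbK]
  refine ⟨pivot (Fin.snoc b r) (Fin.last m) k, Function.update (Fin.snoc K k) (Fin.last m) k,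
    pivot_mem (fun p => ?_) _ _, pivot_apply_update hsnoc (by simpa using hk)⟩
  induction p using Fin.lastCases with
  | last => simpa using U.sub_mem huU (U.sum_mem fun p _ => U.smul_mem _ (hb p))
  | cast p => simpa using hb p

theorem exists_isCleanBasis (hU : Module.finrank ℚ U = g) :
    ∃ (b : Fin g → Fin d → ℚ) (K : Fin g → Fin d), IsCleanBasis U b K := by
  suffices ∀ m ≤ g, ∃ (b : Fin m → Fin d → ℚ) (K : Fin m → Fin d), IsCleanFamily U b K by
    obtain ⟨b, K, h⟩ := this g le_rfl
    exact ⟨b, K, .of_isCleanFamily hU h⟩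
  intro m hm
  induction m with
  | zero => exact ⟨Fin.elim0, Fin.elim0, fun p => p.elim0, fun p => p.elim0⟩
  | succ m ih =>
    obtain ⟨b, K, h⟩ := ih (by omega)
    exact exists_isCleanFamily_succ h (by omega)

end CleanBasis

theorem card_filter_update_lt {α β : Type*} [Fintype α] [DecidableEq α] {P : β → Prop}
    [DecidablePred P] {K : α → β} {i : α} {j : β} (hi : P (K i)) (hj : ¬ P j) :
    #{q | P (Function.update K i j q)} < #{q | P (K q)} := by
  have : ({q | P (Function.update K i j q)} : Finset α) = ({q | P (K q)} : Finset α).erase i := by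
    ext q
    rcases eq_or_ne q i with rfl | hq <;> simp [*]
  rw [this]
  exact Finset.card_erase_lt_of_mem (by simpa using hi)

/-- If v ∈ ℕ^d is C-large with respect to a g-dimensional subspace U (i.e. not C-small),
then some clean basis of U contains a vector all of whose supporting coordinates of v
are at least C. -/
theorem clean_basis_of_large {d g : ℕ} (U : Submodule ℚ (Fin d → ℚ))
    (hU : Module.finrank ℚ U = g) (v : Fin d → ℕ) (C : ℕ)
    (hlarge : ¬ CSmall g U C v) :
    ∃ (b : Fin g → (Fin d → ℚ)) (K : Fin g → Fin d), IsCleanBasis U b K ∧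
      ∃ i : Fin g, ∀ j : Fin d, b i j ≠ 0 → C ≤ v j := by
  obtain ⟨b₀, K₀, h₀⟩ := exists_isCleanBasis hU
  obtain ⟨K, ⟨b, hbK⟩, hmin⟩ := (measure fun K : Fin g → Fin d => #{q | C ≤ v (K q)}).wf.has_min
    {K | ∃ b, IsCleanBasis U b K} ⟨K₀, b₀, h₀⟩
  obtain ⟨i, hi⟩ : ∃ i, C ≤ v (K i) := by
    by_contra! h
    exact hlarge ⟨b, K, hbK, h⟩
  refine ⟨b, K, hbK, i, fun j hij => ?_⟩
  by_contra! hj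
  exact hmin _ ⟨_, hbK.pivot hij⟩ (card_filter_update_lt (P := (C ≤ v ·)) hi (by omega))
end

section
/- Let n, d, M ≥ 1 and Y ∈ ℕ, and define L_0 = n − 1 and L_i = n·(d·(M·L_{i−1} + Y))^i + L_{i−1} for i ≥ 1. Then for every g ∈ ℕ, L_g ≤ (4·n·d·M·(Y+1))^{(g+1)^{g+1}}. -/
/-!
With `Q i = d * (M * L i + Y)` the recursion becomes `Q (i + 1) = d * M * n * Q i ^ (i + 1) + Q i`,
and the invariant `2 * Q g ≤ B ^ ((g + 1) ^ (g + 1))` for `B = 4 * n * d * M * (Y + 1)` propagates: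
the step raises the exponent `e` to at most `e * (g + 1) + 1`, which stays below
`(g + 2) ^ (g + 2)` because `(g + 1) ^ (g + 2) < (g + 2) ^ (g + 2)`.
-/

theorem succ_pow_succ_mul_succ_add_one_le (g : ℕ) :
    (g + 1) ^ (g + 1) * (g + 1) + 1 ≤ (g + 2) ^ (g + 2) := by
  rw [← pow_succ]
  exact Nat.pow_lt_pow_left (by omega) (by omega)

theorem two_mul_mul_pow_add_le {c B Q X k : ℕ} (hk : k ≠ 0) (hcB : c + 1 ≤ B)
    (hQ : 2 * Q ≤ X) : 2 * (c * Q ^ k + Q) ≤ B * X ^ k := by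
  have hpow : 2 * Q ^ k ≤ X ^ k :=
    calc 2 * Q ^ k ≤ 2 ^ k * Q ^ k := Nat.mul_le_mul_right _ (Nat.le_self_pow hk 2)
      _ = (2 * Q) ^ k := (mul_pow 2 Q k).symm
      _ ≤ X ^ k := Nat.pow_le_pow_left hQ k
  have hlin : 2 * Q ≤ X ^ k := hQ.trans (Nat.le_self_pow hk X)
  calc 2 * (c * Q ^ k + Q) = c * (2 * Q ^ k) + 2 * Q := by ring
    _ ≤ c * X ^ k + X ^ k := by gcongr
    _ = (c + 1) * X ^ k := by ring
    _ ≤ B * X ^ k := Nat.mul_le_mul_right _ hcB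

theorem two_mul_le_pow_succ_pow_succ {c B : ℕ} {Q : ℕ → ℕ} (hcB : c + 1 ≤ B)
    (hQ0 : 2 * Q 0 ≤ B) (hQs : ∀ i, Q (i + 1) = c * Q i ^ (i + 1) + Q i) :
    ∀ g, 2 * Q g ≤ B ^ ((g + 1) ^ (g + 1)) := by
  intro g
  induction g with
  | zero => simpa using hQ0
  | succ g ih =>
    calc 2 * Q (g + 1) ≤ B * (B ^ ((g + 1) ^ (g + 1))) ^ (g + 1) := by
          rw [hQs]; exact two_mul_mul_pow_add_le (by omega) hcB ih
      _ = B ^ ((g + 1) ^ (g + 1) * (g + 1) + 1) := by rw [← pow_mul]; exact (pow_succ' B _).symm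
      _ ≤ B ^ ((g + 2) ^ (g + 2)) :=
          Nat.pow_le_pow_right (by omega) (succ_pow_succ_mul_succ_add_one_le g)

/-- Arithmetic bound on the Rackoff-style recursion: with L_0 = n − 1 and
L_i = n·(d·(M·L_{i−1} + Y))^i + L_{i−1}, we have L_g ≤ (4·n·d·M·(Y+1))^((g+1)^(g+1)). -/
theorem L_le_bound (n d M Y : ℕ) (hn : 1 ≤ n) (hd : 1 ≤ d) (hM : 1 ≤ M)
    (L : ℕ → ℕ) (hL0 : L 0 = n - 1)
    (hLs : ∀ i, L (i + 1) = n * (d * (M * L i + Y)) ^ (i + 1) + L i) :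
    ∀ g : ℕ, L g ≤ (4 * n * d * M * (Y + 1)) ^ ((g + 1) ^ (g + 1)) := by
  intro g
  have hndM : 1 ≤ n * d * M := Nat.one_le_iff_ne_zero.mpr (by positivity)
  have hcB : d * M * n + 1 ≤ 4 * n * d * M * (Y + 1) := by nlinarith
  have hQ0 : 2 * (d * (M * L 0 + Y)) ≤ 4 * n * d * M * (Y + 1) := by
    have h : M * (n - 1) + Y ≤ n * M * (Y + 1) := by
      have : M * (n - 1) ≤ n * M := by rw [mul_comm n]; exact Nat.mul_le_mul_left _ (by omega)
      have : Y ≤ n * M * Y := Nat.le_mul_of_pos_left _ (by positivity)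
      linarith
    calc 2 * (d * (M * L 0 + Y)) ≤ 2 * (d * (n * M * (Y + 1))) := by rw [hL0]; gcongr
      _ ≤ 4 * n * d * M * (Y + 1) := by nlinarith
  have hQs : ∀ i, d * (M * L (i + 1) + Y) = d * M * n * (d * (M * L i + Y)) ^ (i + 1)
      + d * (M * L i + Y) := fun i => by rw [hLs]; ring
  have hLQ : L g ≤ 2 * (d * (M * L g + Y)) :=
    calc L g ≤ M * L g := Nat.le_mul_of_pos_left _ hM
      _ ≤ d * (M * L g + Y) := (Nat.le_add_right _ _).trans (Nat.le_mul_of_pos_left _ hd)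
      _ ≤ 2 * (d * (M * L g + Y)) := Nat.le_mul_of_pos_left _ (by norm_num)
  exact hLQ.trans (two_mul_le_pow_succ_pow_succ (Q := fun i => d * (M * L i + Y)) hcB hQ0 hQs g)
end

section
/- Let V = (Q,T) be a d-VASS with n states, maximal transition norm M, and geometric dimension g, and define K_0 = n − 1 and K_i = n·d^i·∏_{j=0}^{i−1}(‖y‖_∞ + M·K_j) + K_{i−1} for i ≥ 1. If there is a run in V from configuration s(x) that covers t(y), then there is a run from s(x) that covers t(y) of length at most K_g. -/
open Finset


/-- Max-norm of an integer vector. -/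
def intNorm {d : ℕ} (a : Fin d → ℤ) : ℕ := Finset.univ.sup (fun i => (a i).natAbs)

/-- The maximal transition norm of a VASS. -/
def vassNorm {n d : ℕ} (T : VASS n d) : ℕ := T.sup (fun t => intNorm t.2.1)

/-- Max-norm of a vector of naturals. -/
def natNorm {d : ℕ} (y : Fin d → ℕ) : ℕ := Finset.univ.sup y


/-!
Work with integer-valued configurations of which only the coordinates in a set `A` must stay
nonnegative, and induct on the rank `i` of these coordinates as linear forms on the cycle space.
Two configurations of a run with the same state differ by a cycle effect; if they also agree on
coordinates whose forms span those of `A`, they agree on all of `A` and the loop between them can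
be cut. So along a shortest covering run, as long as for every `j < i` the coordinates of `A`
below `B_j = ‖y‖∞ + M·K_j` have rank `> j`, a greedy choice of one such coordinate per `j`
spanning `A` gives an injective signature (state, chosen coordinates, their values), and this
phase has at most `n·d^i·∏_{j<i} B_j` configurations. At the first configuration where the
coordinates below some `B_j` have rank `≤ j`, the induction hypothesis covers them within `K_j`
steps, during which the other coordinates, starting above `B_j`, cannot fall below `‖y‖∞`.
-/

theorem List.pairwise_of_forall_eq_append {α : Type*} {R : α → α → Prop} :
    ∀ {L : List α}, (∀ l₁ a l₂ b l₃, L = l₁ ++ a :: (l₂ ++ b :: l₃) → R a b) → L.Pairwise R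
  | [], _ => .nil
  | a :: l, h => .cons
      (fun b hb => by
        obtain ⟨l₂, l₃, rfl⟩ := List.mem_iff_append.1 hb
        exact h [] a l₂ b l₃ rfl)
      (List.pairwise_of_forall_eq_append fun l₁ a' l₂ b l₃ hl =>
        h (a :: l₁) a' l₂ b l₃ (by rw [hl]; rfl))

theorem List.exists_eq_append_of_exists_mem {α : Type*} {p : α → Prop} :
    ∀ {L : List α}, (∃ c ∈ L, p c) → ∃ P c S, L = P ++ c :: S ∧ p c ∧ ∀ e ∈ P, ¬ p e
  | [], ⟨_, hc, _⟩ => absurd hc List.not_mem_nil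
  | a :: l, ⟨c, hc, hpc⟩ => by
    by_cases ha : p a
    · exact ⟨[], a, l, rfl, ha, by simp⟩
    · obtain rfl | hc := List.mem_cons.1 hc
      · exact absurd hpc ha
      obtain ⟨P, c', S, rfl, hc', hP⟩ := List.exists_eq_append_of_exists_mem ⟨c, hc, hpc⟩
      exact ⟨a :: P, c', S, rfl, hc', by simpa [ha] using hP⟩

theorem exists_linearIndependent_comp_of_lt_finrank {K V ι : Type*} [DivisionRing K]
    [AddCommGroup V] [Module K V] (v : ι → V) (Z : ℕ → Set ι) :
    ∀ i, (∀ j < i, j < Module.finrank K (Submodule.span K (v '' Z j))) →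
      ∃ c : Fin i → ι, (∀ j : Fin i, c j ∈ Z j) ∧ LinearIndependent K (v ∘ c)
  | 0, _ => ⟨Fin.elim0, fun j => j.elim0, linearIndependent_empty_type⟩
  | i + 1, hZ => by
    obtain ⟨c, hcZ, hc⟩ :=
      exists_linearIndependent_comp_of_lt_finrank v Z i fun j hj => hZ j (by omega)
    obtain ⟨k, hkZ, hk⟩ : ∃ k ∈ Z i, v k ∉ Submodule.span K (Set.range (v ∘ c)) := by
      by_contra! h
      have := Module.Finite.span_of_finite K (Set.finite_range (v ∘ c))
      have hle : Submodule.span K (v '' Z i) ≤ Submodule.span K (Set.range (v ∘ c)) :=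
        Submodule.span_le.2 (Set.image_subset_iff.2 h)
      have := (hZ i (by omega)).trans_le (Submodule.finrank_mono hle)
      rw [finrank_span_eq_card hc, Fintype.card_fin] at this
      exact lt_irrefl _ this
    refine ⟨Fin.snoc c k, fun j => ?_, ?_⟩
    · induction j using Fin.lastCases with
      | last => simpa using hkZ
      | cast j => simpa using hcZ j
    · rw [Fin.comp_snoc]
      exact linearIndependent_finSnoc.2 ⟨hc, hk⟩

theorem exists_subset_span_range_of_lt_finrank {K V ι : Type*} [DivisionRing K]
    [AddCommGroup V] [Module K V] [FiniteDimensional K V] (v : ι → V) {A : Set ι}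
    {Z : ℕ → Set ι} {i : ℕ} (hZA : ∀ j < i, Z j ⊆ A)
    (hZ : ∀ j < i, j < Module.finrank K (Submodule.span K (v '' Z j)))
    (hA : Module.finrank K (Submodule.span K (v '' A)) ≤ i) :
    ∃ c : Fin i → ι, (∀ j : Fin i, c j ∈ Z j) ∧ v '' A ⊆ Submodule.span K (v '' Set.range c) := by
  obtain ⟨c, hcZ, hc⟩ := exists_linearIndependent_comp_of_lt_finrank v Z i hZ
  have hle : Submodule.span K (v '' Set.range c) ≤ Submodule.span K (v '' A) := by
    refine Submodule.span_mono (Set.image_mono ?_)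
    rintro _ ⟨j, rfl⟩
    exact hZA j j.isLt (hcZ j)
  have heq := Submodule.eq_of_le_of_finrank_le hle
    (by rwa [← Set.range_comp, finrank_span_eq_card hc, Fintype.card_fin])
  exact ⟨c, hcZ, heq ▸ Submodule.subset_span⟩

variable {n d : ℕ} {T : VASS n d}

/-- Configurations with integer counters: nonnegativity is imposed separately, and only on the
coordinates that are still tracked. -/
abbrev ZConfig (n d : ℕ) := Fin n × (Fin d → ℤ)

def ZStep (T : VASS n d) (c c' : ZConfig n d) : Prop :=
  ∃ a, (c.1, a, c'.1) ∈ T ∧ c'.2 = c.2 + a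

def shiftConfig (w : Fin d → ℤ) (c : ZConfig n d) : ZConfig n d := (c.1, c.2 + w)

theorem ZStep.shiftConfig {c c' : ZConfig n d} (h : ZStep T c c') (w : Fin d → ℤ) :
    ZStep T (shiftConfig w c) (shiftConfig w c') := by
  obtain ⟨a, ha, h⟩ := h
  exact ⟨a, ha, by simp only [_root_.shiftConfig, h]; abel⟩

theorem abs_le_vassNorm {p q : Fin n} {a : Fin d → ℤ} (h : (p, a, q) ∈ T) (k : Fin d) :
    |a k| ≤ vassNorm T := by
  have hk : (a k).natAbs ≤ intNorm a := Finset.le_sup (f := fun i => (a i).natAbs) (mem_univ k)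
  have ha : intNorm a ≤ vassNorm T := Finset.le_sup (f := fun t : Transition n d => intNorm t.2.1) h
  rw [Int.abs_eq_natAbs]
  exact_mod_cast hk.trans ha

theorem ZStep.sub_vassNorm_le {c c' : ZConfig n d} (h : ZStep T c c') (k : Fin d) :
    c.2 k - vassNorm T ≤ c'.2 k := by
  obtain ⟨a, ha, h⟩ := h
  rw [h, Pi.add_apply]
  linarith [neg_abs_le (a k), abs_le_vassNorm ha k]

theorem sub_vassNorm_mul_length_le_of_isChain (k : Fin d) :
    ∀ {c : ZConfig n d} {l : List (ZConfig n d)}, (c :: l).IsChain (ZStep T) →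
      ∀ e ∈ c :: l, c.2 k - vassNorm T * l.length ≤ e.2 k
  | c, [], _, e, he => by simp_all
  | c, c' :: l, h, e, he => by
    rw [List.isChain_cons_cons] at h
    have hstep := h.1.sub_vassNorm_le k
    have hrest := sub_vassNorm_mul_length_le_of_isChain k h.2
    rcases List.mem_cons.1 he with rfl | he
    · have : (0 : ℤ) ≤ vassNorm T * (l.length + 1 : ℕ) := by positivity
      simp only [List.length_cons]
      linarith
    · have := hrest e he
      push_cast [List.length_cons]
      linarith

theorem exists_path_of_isChain :
    ∀ {a b : ZConfig n d} {m : List (ZConfig n d)}, (a :: (m ++ [b])).IsChain (ZStep T) →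
      ∃ ts, ∃ h : ts ≠ [], IsPath T ts ∧ (ts.head h).1 = a.1 ∧ (ts.getLast h).2.2 = b.1 ∧
        b.2 = a.2 + effect ts
  | a, b, [], h => by
    obtain ⟨x, hx, hb⟩ := List.isChain_pair.1 h
    exact ⟨[(a.1, x, b.1)], List.cons_ne_nil _ _, ⟨by simpa using hx, List.isChain_singleton _⟩,
      rfl, rfl, by simp [effect, hb]⟩
  | a, b, c :: m, h => by
    rw [List.cons_append, List.isChain_cons_cons] at h
    obtain ⟨⟨x, hx, hc⟩, hrest⟩ := h
    obtain ⟨ts, hts, ⟨hT, hchain⟩, hhead, hlast, hb⟩ := exists_path_of_isChain hrest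
    refine ⟨(a.1, x, c.1) :: ts, List.cons_ne_nil _ _, ⟨?_, ?_⟩, rfl, ?_, ?_⟩
    · simpa [hx] using hT
    · obtain ⟨u, ts, rfl⟩ := List.exists_cons_of_ne_nil hts
      exact List.isChain_cons_cons.2 ⟨hhead.symm, hchain⟩
    · rwa [List.getLast_cons hts]
    · rw [hb, hc]
      simp only [effect, List.map_cons, List.sum_cons]
      abel

theorem toQ_sub_mem_cycleSpace {a b : ZConfig n d} {m : List (ZConfig n d)}
    (h : (a :: (m ++ [b])).IsChain (ZStep T)) (hab : a.1 = b.1) :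
    toQ (b.2 - a.2) ∈ cycleSpace T := by
  obtain ⟨ts, hts, hpath, hhead, hlast, hb⟩ := exists_path_of_isChain h
  refine Submodule.subset_span ⟨ts, ⟨hpath, hts, by rw [hlast, hhead, hab]⟩, ?_⟩
  rw [hb, add_sub_cancel_left]

theorem List.IsChain.pairwise_toQ_sub_mem_cycleSpace {L : List (ZConfig n d)}
    (hL : L.IsChain (ZStep T)) :
    L.Pairwise fun a b => a.1 = b.1 → toQ (b.2 - a.2) ∈ cycleSpace T :=
  List.pairwise_of_forall_eq_append fun l₁ a l₂ b l₃ hL' => by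
    subst hL'
    exact toQ_sub_mem_cycleSpace (m := l₂) (hL.infix ⟨l₁, l₃, by simp⟩)

noncomputable def cycleCoord (T : VASS n d) (k : Fin d) : Module.Dual ℚ (cycleSpace T) :=
  (LinearMap.proj k).comp (cycleSpace T).subtype

noncomputable def coordRank (T : VASS n d) (A : Finset (Fin d)) : ℕ :=
  Module.finrank ℚ (Submodule.span ℚ (cycleCoord T '' A))

theorem coordRank_univ_le (T : VASS n d) : coordRank T univ ≤ geomDim T :=
  (Submodule.finrank_le _).trans Subspace.dual_finrank_eq.le

theorem eq_zero_of_cycleCoord_subset_span {A C : Set (Fin d)}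
    (hAC : cycleCoord T '' A ⊆ Submodule.span ℚ (cycleCoord T '' C)) {v : Fin d → ℚ}
    (hv : v ∈ cycleSpace T) (hC : ∀ k ∈ C, v k = 0) : ∀ k ∈ A, v k = 0 := by
  have hker : Submodule.span ℚ (cycleCoord T '' C) ≤
      LinearMap.ker (Module.Dual.eval ℚ (cycleSpace T) ⟨v, hv⟩) := by
    rw [Submodule.span_le]
    rintro _ ⟨k, hk, rfl⟩
    exact hC k hk
  exact fun k hk => hker (hAC ⟨k, hk, rfl⟩)

theorem exists_spanning_low_coords {A : Finset (Fin d)} {c : ZConfig n d} {i : ℕ}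
    (hA : coordRank T A ≤ i) (B : ℕ → ℕ)
    (hrank : ∀ j < i, j < coordRank T (A.filter fun k => c.2 k < B j)) :
    ∃ ch : Fin i → Fin d, (∀ j : Fin i, ch j ∈ A ∧ c.2 (ch j) < B j) ∧
      cycleCoord T '' A ⊆ Submodule.span ℚ (cycleCoord T '' Set.range ch) := by
  obtain ⟨ch, hch, hspan⟩ := exists_subset_span_range_of_lt_finrank (cycleCoord T)
    (Z := fun j => ↑(A.filter fun k => c.2 k < B j)) (fun j _ => coe_subset.2 (filter_subset _ _))
    hrank hA
  exact ⟨ch, fun j => by simpa using hch j, hspan⟩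

section Bound

variable {K B : ℕ → ℕ}

theorem add_le_of_recursion
    (hKs : ∀ i, K (i + 1) = n * d ^ (i + 1) * (∏ j ∈ range (i + 1), B j) + K i)
    {i j : ℕ} (hji : j < i) : n * d ^ i * (∏ j ∈ range i, B j) + K j ≤ K i := by
  obtain ⟨i, rfl⟩ := Nat.exists_eq_add_of_lt hji
  have hmono : Monotone K := monotone_nat_of_le_succ fun i => by rw [hKs i]; omega
  rw [hKs]
  exact Nat.add_le_add_left (hmono (by omega)) _

theorem le_add_one_of_recursion (hK0 : K 0 = n - 1)
    (hKs : ∀ i, K (i + 1) = n * d ^ (i + 1) * (∏ j ∈ range (i + 1), B j) + K i) (i : ℕ) :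
    n * d ^ i * (∏ j ∈ range i, B j) ≤ K i + 1 := by
  cases i with
  | zero => simp only [pow_zero, mul_one, range_zero, prod_empty]; omega
  | succ i => rw [hKs]; omega

end Bound

/-- The run is the whole list `L`, starting with `c₀`, so it has `L.length - 1` steps. -/
structure IsCoverRun (T : VASS n d) (q : Fin n) (y : Fin d → ℕ) (A : Finset (Fin d))
    (c₀ : ZConfig n d) (L : List (ZConfig n d)) : Prop where
  chain : L.IsChain (ZStep T)
  head : L.head? = some c₀
  nonneg : ∀ c ∈ L, ∀ k ∈ A, 0 ≤ c.2 k
  covers : ∀ c ∈ L.getLast?, c.1 = q ∧ ∀ k ∈ A, (y k : ℤ) ≤ c.2 k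

namespace IsCoverRun

variable {q : Fin n} {y : Fin d → ℕ} {A : Finset (Fin d)} {c₀ : ZConfig n d}

theorem cut {l₁ l₂ l₃ : List (ZConfig n d)} {a b : ZConfig n d}
    (hL : IsCoverRun T q y A c₀ (l₁ ++ a :: (l₂ ++ b :: l₃))) (hab : a.1 = b.1)
    (hA : ∀ k ∈ A, a.2 k = b.2 k) :
    IsCoverRun T q y A c₀ (l₁ ++ (b :: l₃).map (shiftConfig (a.2 - b.2))) := by
  set τ := shiftConfig (n := n) (a.2 - b.2)
  have hτb : τ b = a := Prod.ext hab.symm (by simp [τ, shiftConfig])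
  have hτA : ∀ e k, k ∈ A → (τ e).2 k = e.2 k := fun e k hk => by
    simp [τ, shiftConfig, hA k hk]
  have hlast : (l₁ ++ (b :: l₃).map τ).getLast? =
      (l₁ ++ a :: (l₂ ++ b :: l₃)).getLast?.map τ := by
    rw [List.getLast?_append_of_ne_nil _ (by simp), List.getLast?_map,
      show l₁ ++ a :: (l₂ ++ b :: l₃) = (l₁ ++ a :: l₂) ++ b :: l₃ by simp,
      List.getLast?_append_cons]
  rw [List.map_cons, hτb] at hlast ⊢
  refine ⟨?_, ?_, ?_, ?_⟩
  · have hpre : (l₁ ++ [a]).IsChain (ZStep T) := hL.chain.prefix ⟨l₂ ++ b :: l₃, by simp⟩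
    have hsuf : (b :: l₃).IsChain (ZStep T) := hL.chain.suffix ⟨l₁ ++ a :: l₂, by simp⟩
    have hτ := (List.isChain_map τ).2 (hsuf.imp fun _ _ h => h.shiftConfig _)
    rw [List.map_cons, hτb] at hτ
    simpa using hpre.append_overlap (l₃ := l₃.map τ) hτ (List.cons_ne_nil _ _)
  · rw [← hL.head]
    cases l₁ <;> rfl
  · intro c hc k hk
    simp only [List.mem_append, List.mem_cons, List.mem_map] at hc
    rcases hc with hc | rfl | ⟨e, he, rfl⟩
    · exact hL.nonneg c (by simp [hc]) k hk
    · exact hL.nonneg c (by simp) k hk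
    · rw [hτA e k hk]
      exact hL.nonneg e (by simp [he]) k hk
  · intro c hc
    rw [hlast, Option.mem_map] at hc
    obtain ⟨e, he, rfl⟩ := hc
    obtain ⟨hq, hy⟩ := hL.covers e he
    exact ⟨hq, fun k hk => (hτA e k hk).symm ▸ hy k hk⟩

theorem pairwise_of_minimal {L : List (ZConfig n d)} (hL : IsCoverRun T q y A c₀ L)
    (hmin : ∀ L', IsCoverRun T q y A c₀ L' → L.length ≤ L'.length) :
    L.Pairwise fun a b => a.1 = b.1 → ∃ k ∈ A, a.2 k ≠ b.2 k :=
  List.pairwise_of_forall_eq_append fun l₁ a l₂ b l₃ hL' hab => by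
    by_contra! hA
    subst hL'
    have := hmin _ (hL.cut hab hA)
    simp only [List.length_append, List.length_cons, List.length_map] at this
    omega

theorem suffix {P S : List (ZConfig n d)} {c : ZConfig n d} {A' : Finset (Fin d)}
    (hL : IsCoverRun T q y A c₀ (P ++ c :: S)) (hA' : A' ⊆ A) :
    IsCoverRun T q y A' c (c :: S) where
  chain := hL.chain.suffix ⟨P, rfl⟩
  head := rfl
  nonneg e he k hk := hL.nonneg e (List.mem_append_right _ he) k (hA' hk)
  covers e he := by
    rw [← List.getLast?_append_cons P] at he
    exact ⟨(hL.covers e he).1, fun k hk => (hL.covers e he).2 k (hA' hk)⟩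

theorem splice {P S σ : List (ZConfig n d)} {c : ZConfig n d} {A' : Finset (Fin d)}
    (hL : IsCoverRun T q y A c₀ (P ++ c :: S)) (hσ : IsCoverRun T q y A' c (c :: σ))
    (hbig : ∀ k ∈ A, k ∉ A' → (natNorm y : ℤ) + vassNorm T * σ.length ≤ c.2 k) :
    IsCoverRun T q y A c₀ (P ++ c :: σ) := by
  have hhigh : ∀ e ∈ c :: σ, ∀ k ∈ A, k ∉ A' → (natNorm y : ℤ) ≤ e.2 k := by
    intro e he k hk hk'
    have := sub_vassNorm_mul_length_le_of_isChain k hσ.chain e he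
    linarith [hbig k hk hk']
  have hy : ∀ k, (y k : ℤ) ≤ natNorm y := fun k => by
    exact_mod_cast Finset.le_sup (f := y) (mem_univ k)
  refine ⟨?_, ?_, ?_, ?_⟩
  · have hpre : (P ++ [c]).IsChain (ZStep T) := hL.chain.prefix ⟨S, by simp⟩
    simpa using hpre.append_overlap (l₃ := σ) hσ.chain (List.cons_ne_nil _ _)
  · rw [← hL.head]
    cases P <;> rfl
  · intro e he k hk
    rcases List.mem_append.1 he with he | he
    · exact hL.nonneg e (List.mem_append_left _ he) k hk
    · by_cases hk' : k ∈ A'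
      · exact hσ.nonneg e he k hk'
      · exact (Nat.cast_nonneg _).trans (hhigh e he k hk hk')
  · intro e he
    rw [List.getLast?_append_cons] at he
    refine ⟨(hσ.covers e he).1, fun k hk => ?_⟩
    by_cases hk' : k ∈ A'
    · exact (hσ.covers e he).2 k hk'
    · exact (hy k).trans (hhigh e (List.mem_of_getLast? he) k hk hk')

theorem pairwise_exists_ne_of_subset_span {L : List (ZConfig n d)}
    (hL : IsCoverRun T q y A c₀ L)
    (hmin : ∀ L', IsCoverRun T q y A c₀ L' → L.length ≤ L'.length) :
    L.Pairwise fun a b => a.1 = b.1 → ∀ C : Set (Fin d),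
      cycleCoord T '' A ⊆ Submodule.span ℚ (cycleCoord T '' C) → ∃ k ∈ C, a.2 k ≠ b.2 k := by
  refine ((hL.pairwise_of_minimal hmin).and hL.chain.pairwise_toQ_sub_mem_cycleSpace).imp ?_
  rintro a b ⟨hdiff, hcyc⟩ hab C hspan
  by_contra! hC
  obtain ⟨k, hk, hne⟩ := hdiff hab
  have hzero := eq_zero_of_cycleCoord_subset_span hspan (hcyc hab)
    (fun k hk => by simp [toQ, hC k hk]) k hk
  simp only [toQ, Pi.sub_apply, Int.cast_eq_zero, sub_eq_zero] at hzero
  exact hne hzero.symm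

theorem length_le_of_sublist {L P : List (ZConfig n d)} (hL : IsCoverRun T q y A c₀ L)
    (hmin : ∀ L', IsCoverRun T q y A c₀ L' → L.length ≤ L'.length) (hP : P.Sublist L)
    {i : ℕ} (hA : coordRank T A ≤ i) (B : ℕ → ℕ)
    (hrank : ∀ c ∈ P, ∀ j < i, j < coordRank T (A.filter fun k => c.2 k < B j)) :
    P.length ≤ n * d ^ i * ∏ j ∈ range i, B j := by
  choose ch hch hspan using fun c hc => exists_spanning_low_coords (c := c) hA B (hrank c hc)
  have hnonneg : ∀ c ∈ P, ∀ k ∈ A, 0 ≤ c.2 k := fun c hc => hL.nonneg c (hP.subset hc)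
  let sig : ∀ c ∈ P, Fin n × (Fin i → Fin d) × (Fin i → ℕ) := fun c hc =>
    (c.1, ch c hc, fun j => (c.2 (ch c hc j)).toNat)
  have hpair : P.Pairwise fun a b => ∀ ha hb, sig a ha ≠ sig b hb := by
    refine ((hL.pairwise_exists_ne_of_subset_span hmin).sublist hP).imp ?_
    rintro a b hne ha hb hsig
    simp only [sig, Prod.mk.injEq] at hsig
    obtain ⟨hab, hch_eq, hval⟩ := hsig
    obtain ⟨_, ⟨j, rfl⟩, hne⟩ := hne hab _ (hspan b hb)
    have hj := congrFun hval j
    rw [hch_eq] at hj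
    have := hnonneg a ha _ (hch b hb j).1
    have := hnonneg b hb _ (hch b hb j).1
    omega
  have hnodup : (P.pmap sig fun _ h => h).Nodup := (List.pairwise_pmap _).2 hpair
  have hsub : (P.pmap sig fun _ h => h).toFinset ⊆
      univ ×ˢ univ ×ˢ Fintype.piFinset fun j : Fin i => range (B j) := by
    intro s hs
    obtain ⟨c, hc, rfl⟩ := List.mem_pmap.1 (List.mem_toFinset.1 hs)
    simp only [sig, mem_product, mem_univ, Fintype.mem_piFinset, mem_range, true_and]
    intro j
    have := hnonneg c hc _ (hch c hc j).1
    have := (hch c hc j).2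
    omega
  calc P.length = (P.pmap sig fun _ h => h).toFinset.card := by
        rw [List.toFinset_card_of_nodup hnodup, List.length_pmap]
    _ ≤ _ := card_le_card hsub
    _ = n * d ^ i * ∏ j ∈ range i, B j := by
        simp [card_product, Fintype.card_piFinset, Fin.prod_univ_eq_prod_range (fun j => B j),
          mul_assoc]

theorem exists_length_le {K : ℕ → ℕ} (hK0 : K 0 = n - 1)
    (hKs : ∀ i, K (i + 1) =
      n * d ^ (i + 1) * (∏ j ∈ range (i + 1), (natNorm y + vassNorm T * K j)) + K i)
    (i : ℕ) : ∀ {A : Finset (Fin d)} {c₀ : ZConfig n d} {L₀ : List (ZConfig n d)},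
      coordRank T A ≤ i → IsCoverRun T q y A c₀ L₀ →
      ∃ L, IsCoverRun T q y A c₀ L ∧ L.length ≤ K i + 1 := by
  induction i using Nat.strong_induction_on with
  | _ i ih =>
  intro A c₀ L₀ hA hL₀
  obtain ⟨L, hL, hmin⟩ := (measure List.length).wf.has_min {L | IsCoverRun T q y A c₀ L} ⟨L₀, hL₀⟩
  replace hmin : ∀ L', IsCoverRun T q y A c₀ L' → L.length ≤ L'.length :=
    fun L' hL' => not_lt.1 (hmin L' hL')
  set B := fun j => natNorm y + vassNorm T * K j
  have hKsB : ∀ i, K (i + 1) = n * d ^ (i + 1) * (∏ j ∈ range (i + 1), B j) + K i := hKs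
  by_cases hev : ∃ c ∈ L, ∃ j < i, coordRank T (A.filter fun k => c.2 k < B j) ≤ j
  · obtain ⟨P, c, S, rfl, ⟨j, hji, hj⟩, hP⟩ := List.exists_eq_append_of_exists_mem hev
    have hPlen := hL.length_le_of_sublist hmin (List.sublist_append_left P _) hA B
      fun e he j hj => not_le.1 fun h => hP e he ⟨j, hj, h⟩
    obtain ⟨σ', hσ', hσlen⟩ := ih j hji hj (hL.suffix (filter_subset _ A))
    obtain ⟨σ, rfl⟩ := List.head?_eq_some_iff.1 hσ'.head
    refine ⟨P ++ c :: σ, hL.splice hσ' fun k hk hk' => ?_, ?_⟩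
    · have hck : (B j : ℤ) ≤ c.2 k := by simpa [hk] using hk'
      have hσK : (σ.length : ℤ) ≤ K j := by simp at hσlen; exact_mod_cast hσlen
      simp only [B, Nat.cast_add, Nat.cast_mul] at hck
      nlinarith [(Nat.cast_nonneg (vassNorm T) : (0 : ℤ) ≤ _)]
    · have := add_le_of_recursion hKsB hji
      simp only [List.length_append, List.length_cons] at hσlen ⊢
      omega
  · have hrank : ∀ c ∈ L, ∀ j < i, j < coordRank T (A.filter fun k => c.2 k < B j) :=
      fun c hc j hj => not_le.1 fun h => hev ⟨c, hc, j, hj, h⟩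
    exact ⟨L, hL, (hL.length_le_of_sublist hmin (List.Sublist.refl L) hA B hrank).trans
      (le_add_one_of_recursion hK0 hKsB i)⟩

end IsCoverRun

def toZConfig (c : Config n d) : ZConfig n d := (c.1, fun k => c.2 k)

theorem zStep_toZConfig_iff {c c' : Config n d} :
    ZStep T (toZConfig c) (toZConfig c') ↔ Step T c c' := by
  simp only [ZStep, Step, toZConfig, funext_iff, Pi.add_apply]

theorem isCoverRun_map_toZConfig_iff {q : Fin n} {y : Fin d → ℕ} {c : Config n d}
    {cs : List (Config n d)} :
    IsCoverRun T q y univ (toZConfig c) ((c :: cs).map toZConfig) ↔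
      IsRunFrom T c cs ∧ (runEnd c cs).1 = q ∧ y ≤ (runEnd c cs).2 := by
  have hchain : ((c :: cs).map toZConfig).IsChain (ZStep T) ↔ IsRunFrom T c cs := by
    rw [List.isChain_map]
    simp only [zStep_toZConfig_iff]
    rfl
  have hlast : ((c :: cs).map toZConfig).getLast? = some (toZConfig (runEnd c cs)) := by
    rw [List.getLast?_map, List.getLast?_eq_some_getLast (List.cons_ne_nil c cs)]
    rfl
  constructor
  · intro h
    obtain ⟨hq, hy⟩ := h.covers _ hlast
    exact ⟨hchain.1 h.chain, hq, fun k => Int.ofNat_le.1 (hy k (mem_univ k))⟩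
  · rintro ⟨hrun, hq, hy⟩
    refine ⟨hchain.2 hrun, rfl, ?_, ?_⟩
    · simp only [List.mem_map]
      rintro _ ⟨e, -, rfl⟩ k -
      exact Int.natCast_nonneg _
    · rw [hlast]
      rintro _ ⟨⟩
      exact ⟨hq, fun k _ => Int.ofNat_le.2 (hy k)⟩

theorem IsCoverRun.exists_eq_map_toZConfig {q : Fin n} {y : Fin d → ℕ} {c : Config n d}
    {L : List (ZConfig n d)} (hL : IsCoverRun T q y univ (toZConfig c) L) :
    ∃ cs, L = (c :: cs).map toZConfig := by
  obtain ⟨l, rfl⟩ := List.head?_eq_some_iff.1 hL.head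
  refine ⟨l.map fun e => (e.1, fun k => (e.2 k).toNat), ?_⟩
  simp only [List.map_cons, List.map_map, List.cons.injEq, true_and]
  refine ((List.map_congr_left fun e he => ?_).trans (List.map_id l)).symm
  exact Prod.ext rfl (funext fun k =>
    Int.toNat_of_nonneg (hL.nonneg e (List.mem_cons_of_mem _ he) k (mem_univ k)))

/-- Improved coverability bound in the geometric dimension: if some run from s(x)
covers t(y), there is a covering run of length at most K_g where K_0 = n − 1 and
K_i = n·d^i·∏_{j<i}(‖y‖∞ + M·K_j) + K_{i−1}. -/
theorem cover_length_le_K {n d g M : ℕ} (T : VASS n d)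
    (hg : geomDim T = g) (hM : vassNorm T = M)
    (s t : Fin n) (x y : Fin d → ℕ)
    (K : ℕ → ℕ) (hK0 : K 0 = n - 1)
    (hKs : ∀ i, K (i + 1) =
      n * d ^ (i + 1) * (∏ j ∈ Finset.range (i + 1), (natNorm y + M * K j)) + K i)
    (hcov : ∃ cs, IsRunFrom T (s, x) cs ∧
      (runEnd (s, x) cs).1 = t ∧ y ≤ (runEnd (s, x) cs).2) :
    ∃ cs, IsRunFrom T (s, x) cs ∧
      (runEnd (s, x) cs).1 = t ∧ y ≤ (runEnd (s, x) cs).2 ∧ cs.length ≤ K g := by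
  subst hg hM
  obtain ⟨cs, hcs⟩ := hcov
  obtain ⟨L, hL, hlen⟩ := (isCoverRun_map_toZConfig_iff.2 hcs).exists_length_le hK0 hKs
    (geomDim T) (coordRank_univ_le T)
  obtain ⟨cs', rfl⟩ := hL.exists_eq_map_toZConfig
  obtain ⟨hrun, hq, hy⟩ := isCoverRun_map_toZConfig_iff.1 hL
  exact ⟨cs', hrun, hq, hy, by simpa using hlen⟩
end

section
/- Let n, d, M ≥ 1 and Y ∈ ℕ, and define K_0 = n − 1 and K_i = n·d^i·∏_{j=0}^{i−1}(Y + M·K_j) + K_{i−1} for i ≥ 1. Then for every g ∈ ℕ, K_g ≤ (4·n·d·M·(Y+1))^{2^{g+1}−1}. -/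
open Finset

/-!
Put `B = 4·n·d·M·(Y+1)` and `e g = 2^(g+1) − 1`, so that `e (g+1) = 2·e g + 1`. Writing
`Q g = d^(g+1)·∏_{j ≤ g}(Y + M·K_j)` (`partialProd`), the recursion reads `K_(g+1) = n·Q g + K_g` and
`Q (g+1) = d·(Y + M·K_(g+1))·Q g`. By simultaneous induction, `K_g + 1 ≤ B^(e g)` and
`Q g ≤ (B^(e g))²`: each new factor `d·(Y + M·K_j)` is at most `d·M·(Y+1)·(K_j + 1) ≤ B^(e j + 1)`,
and `K_(g+1) + 1 ≤ (n + 1)·(B^(e g))² ≤ B^(e (g+1))`.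
-/

lemma pow_two_pow_succ_sub_one (B g : ℕ) :
    B ^ (2 ^ (g + 2) - 1) = B * (B ^ (2 ^ (g + 1) - 1)) ^ 2 := by
  have hexp : 2 ^ (g + 2) - 1 = (2 ^ (g + 1) - 1) * 2 + 1 := by
    have := Nat.one_le_two_pow (n := g + 1)
    rw [pow_succ 2 (g + 1)]
    omega
  rw [hexp, pow_succ, pow_mul, mul_comm]

lemma mul_add_mul_le {d M Y x P : ℕ} (hM : 1 ≤ M) (hx : x + 1 ≤ P) :
    d * (Y + M * x) ≤ d * M * (Y + 1) * P := by
  have hfactor : Y + M * x ≤ M * (Y + 1) * (x + 1) := by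
    have : Y ≤ M * Y := Nat.le_mul_of_pos_left Y hM
    nlinarith [Nat.zero_le (M * Y * x)]
  calc d * (Y + M * x) ≤ d * (M * (Y + 1) * (x + 1)) := Nat.mul_le_mul_left d hfactor
    _ ≤ d * (M * (Y + 1) * P) := by gcongr
    _ = d * M * (Y + 1) * P := by ring

def partialProd (d M Y : ℕ) (K : ℕ → ℕ) (i : ℕ) : ℕ :=
  d ^ (i + 1) * ∏ j ∈ range (i + 1), (Y + M * K j)

lemma partialProd_zero (d M Y : ℕ) (K : ℕ → ℕ) :
    partialProd d M Y K 0 = d * (Y + M * K 0) := by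
  simp [partialProd]

lemma partialProd_succ (d M Y : ℕ) (K : ℕ → ℕ) (i : ℕ) :
    partialProd d M Y K (i + 1) = d * (Y + M * K (i + 1)) * partialProd d M Y K i := by
  rw [partialProd, partialProd, prod_range_succ, pow_succ]
  ring

lemma succ_le_four_mul {n d M Y : ℕ} (hn : 1 ≤ n) (hd : 1 ≤ d) (hM : 1 ≤ M) :
    n + 1 ≤ 4 * n * d * M * (Y + 1) := by
  have : 1 ≤ d * M * (Y + 1) := Nat.mul_pos (Nat.mul_pos hd hM) Y.succ_pos
  calc n + 1 ≤ 4 * n * 1 := by omega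
    _ ≤ 4 * n * (d * M * (Y + 1)) := by gcongr
    _ = 4 * n * d * M * (Y + 1) := by ring

lemma le_four_mul {n d M Y : ℕ} (hn : 1 ≤ n) :
    d * M * (Y + 1) ≤ 4 * n * d * M * (Y + 1) := by
  calc d * M * (Y + 1) = 1 * (d * M * (Y + 1)) := (one_mul _).symm
    _ ≤ 4 * n * (d * M * (Y + 1)) := by gcongr; omega
    _ = 4 * n * d * M * (Y + 1) := by ring

lemma succ_le_and_partialProd_le {n d M Y : ℕ} (hn : 1 ≤ n) (hd : 1 ≤ d) (hM : 1 ≤ M)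
    {K : ℕ → ℕ} (hK0 : K 0 = n - 1)
    (hKs : ∀ i, K (i + 1) = n * partialProd d M Y K i + K i) (g : ℕ) :
    K g + 1 ≤ (4 * n * d * M * (Y + 1)) ^ (2 ^ (g + 1) - 1) ∧
      partialProd d M Y K g ≤ ((4 * n * d * M * (Y + 1)) ^ (2 ^ (g + 1) - 1)) ^ 2 := by
  set B := 4 * n * d * M * (Y + 1)
  have hfactor : ∀ i, K i + 1 ≤ B ^ (2 ^ (i + 1) - 1) →
      d * (Y + M * K i) ≤ B * B ^ (2 ^ (i + 1) - 1) := fun i hKi =>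
    (mul_add_mul_le hM hKi).trans (Nat.mul_le_mul_right _ (le_four_mul hn))
  induction g with
  | zero =>
    have hK : K 0 + 1 ≤ B ^ (2 ^ (0 + 1) - 1) :=
      calc K 0 + 1 = n := by omega
        _ ≤ B := (Nat.le_succ n).trans (succ_le_four_mul hn hd hM)
        _ = B ^ (2 ^ (0 + 1) - 1) := by norm_num
    refine ⟨hK, ?_⟩
    calc partialProd d M Y K 0 = d * (Y + M * K 0) := partialProd_zero d M Y K
      _ ≤ B * B ^ (2 ^ (0 + 1) - 1) := hfactor 0 hK
      _ = (B ^ (2 ^ (0 + 1) - 1)) ^ 2 := by norm_num [sq]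
  | succ i ih =>
    obtain ⟨hKi, hQi⟩ := ih
    set P := B ^ (2 ^ (i + 1) - 1)
    have hK : K (i + 1) + 1 ≤ B ^ (2 ^ (i + 1 + 1) - 1) := by
      have hP : P ≤ P ^ 2 := Nat.le_self_pow two_ne_zero P
      calc K (i + 1) + 1 = n * partialProd d M Y K i + (K i + 1) := by rw [hKs]; ring
        _ ≤ n * P ^ 2 + P ^ 2 := by gcongr; omega
        _ = (n + 1) * P ^ 2 := by ring
        _ ≤ B * P ^ 2 := Nat.mul_le_mul_right _ (succ_le_four_mul hn hd hM)
        _ = B ^ (2 ^ (i + 1 + 1) - 1) := (pow_two_pow_succ_sub_one B i).symm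
    refine ⟨hK, ?_⟩
    calc partialProd d M Y K (i + 1) = d * (Y + M * K (i + 1)) * partialProd d M Y K i :=
          partialProd_succ d M Y K i
      _ ≤ B * B ^ (2 ^ (i + 1 + 1) - 1) * P ^ 2 := Nat.mul_le_mul (hfactor (i + 1) hK) hQi
      _ = (B ^ (2 ^ (i + 1 + 1) - 1)) ^ 2 := by rw [pow_two_pow_succ_sub_one B i]; ring

/-- Arithmetic bound on the improved recursion: with K_0 = n − 1 and
K_i = n·d^i·∏_{j<i}(Y + M·K_j) + K_{i−1}, we have K_g ≤ (4·n·d·M·(Y+1))^(2^(g+1)−1). -/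
theorem K_le_bound (n d M Y : ℕ) (hn : 1 ≤ n) (hd : 1 ≤ d) (hM : 1 ≤ M)
    (K : ℕ → ℕ) (hK0 : K 0 = n - 1)
    (hKs : ∀ i, K (i + 1) =
      n * d ^ (i + 1) * (∏ j ∈ Finset.range (i + 1), (Y + M * K j)) + K i) :
    ∀ g : ℕ, K g ≤ (4 * n * d * M * (Y + 1)) ^ (2 ^ (g + 1) - 1) := by
  have hKs' : ∀ i, K (i + 1) = n * partialProd d M Y K i + K i := fun i => by
    rw [hKs, partialProd, mul_assoc]
  exact fun g => (Nat.le_succ _).trans (succ_le_and_partialProd_le hn hd hM hK0 hKs' g).1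
end
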